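/- arXiv:2602.21414 — 4 statements merged into one kernel-verified Lean document; each statement's English description precedes it below -/
import Mathlib

section
/- Let d_v, α, β, γ, a > 0 with α < γ. Suppose u, v : [0,∞) × [0,a] → ℝ are continuous, v(t,·) is C² in x for each t > 0, v(·,x) is C¹ in t, and they satisfy the predator equation ∂_t v(t,x) = d_v ∂_{xx} v(t,x) − γ v(t,x) + α u(t,x) v(t,x) for all t > 0 and x ∈ (0,a), with Neumann boundary conditions ∂_x v(t,0) = ∂_x v(t,a) = 0 for all t > 0, and with 0 ≤ u(t,x) ≤ 1 and v(t,x) ≥ 0 everywhere. Then, writing V(t) = ∫₀ᵃ v(t,x) dx, one has V(t) ≤ V(0)·exp(−(γ−α)t) for all t ≥ 0, and in particular ∫₀ᵃ v(t,x) dx → 0 as t → ∞. -/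
/-!
With `l = γ - α > 0`, the bound `α u v ≤ α v` makes `v` a subsolution of the damped heat
equation `∂ₜw = d ∂ₓₓw - l w` with Neumann conditions. The hypotheses give no control of `∂ₜv`
uniform in `x`, so `∫ v` is not differentiated directly; instead `v` is compared with explicit
solutions. Approximate `v(0, ·)` from above, uniformly, by a cosine sum `∑ bₖ cos (kπx/a)`
(Weierstrass approximation in the variable `cos (πx/a)`), evolve each mode as
`e^{-(l + d k²π²/a²) t} cos (kπx/a)`, and add `δ e^{(d - l) t} cosh (x - a/2)` so that the boundary
fluxes become strictly outward. The parabolic maximum principle keeps `v` below this solution, and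
since every nonconstant mode has mean zero, its integral at time `t` is `e^{-lt} ∫ v(0, ·)` up to an
arbitrarily small error.
-/

open Set Filter Topology Real Polynomial

theorem IsMaxOn.nonpos_of_hasDerivWithinAt_Icc_left {f : ℝ → ℝ} {f' lo hi : ℝ}
    (hmax : IsMaxOn f (Icc lo hi) lo) (hf : HasDerivWithinAt f f' (Icc lo hi) lo)
    (hlt : lo < hi) : f' ≤ 0 := by
  have hcone : hi - lo ∈ posTangentConeAt (Icc lo hi) lo :=
    sub_mem_posTangentConeAt_of_segment_subset (segment_eq_Icc hlt.le ▸ Subset.rfl)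
  have : (hi - lo) * f' ≤ 0 := by
    simpa only [ContinuousLinearMap.smulRight_apply, one_apply_eq_self, smul_eq_mul]
      using! hmax.localize.hasFDerivWithinAt_nonpos hf hcone
  nlinarith

theorem IsMaxOn.nonneg_of_hasDerivWithinAt_Icc_right {f : ℝ → ℝ} {f' lo hi : ℝ}
    (hmax : IsMaxOn f (Icc lo hi) hi) (hf : HasDerivWithinAt f f' (Icc lo hi) hi)
    (hlt : lo < hi) : 0 ≤ f' := by
  have hcone : lo - hi ∈ posTangentConeAt (Icc lo hi) hi :=
    sub_mem_posTangentConeAt_of_segment_subset (by rw [segment_symm, segment_eq_Icc hlt.le])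
  have : (lo - hi) * f' ≤ 0 := by
    simpa only [ContinuousLinearMap.smulRight_apply, one_apply_eq_self, smul_eq_mul]
      using! hmax.localize.hasFDerivWithinAt_nonpos hf hcone
  nlinarith

theorem IsLocalMax.hasDerivAt_deriv_nonpos {f f' : ℝ → ℝ} {x₀ f'' : ℝ}
    (hmax : IsLocalMax f x₀) (hf : ∀ᶠ x in 𝓝 x₀, HasDerivAt f (f' x) x)
    (hf'' : HasDerivAt f' f'' x₀) : f'' ≤ 0 := by
  have hderiv : deriv f =ᶠ[𝓝 x₀] f' := hf.mono fun x hx => hx.deriv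
  by_contra! hpos
  have hmin : IsLocalMin f x₀ :=
    isLocalMin_of_deriv_deriv_pos (by rwa [(hf''.congr_of_eventuallyEq hderiv).deriv])
      hmax.deriv_eq_zero hf.self_of_nhds.continuousAt
  have hconst : ∀ᶠ x in 𝓝 x₀, f x = f x₀ :=
    (hmax.and hmin).mono fun x hx => le_antisymm hx.1 hx.2
  have hzero : f' =ᶠ[𝓝 x₀] fun _ => 0 := by
    filter_upwards [hconst.eventually_nhds, hf] with y hy hfy
    exact hfy.unique ((hasDerivAt_const y (f x₀)).congr_of_eventuallyEq hy)
  have := hf''.unique ((hasDerivAt_const x₀ (0 : ℝ)).congr_of_eventuallyEq hzero)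
  linarith

theorem dampedHeat_subsolution_nonpos {d l a T : ℝ} (hd : 0 ≤ d) (hl : 0 < l) (ha : 0 < a)
    {z zt zx zxx : ℝ → ℝ → ℝ}
    (hz : ContinuousOn (fun p : ℝ × ℝ => z p.1 p.2) (Icc 0 T ×ˢ Icc 0 a))
    (hzt : ∀ t ∈ Ioc 0 T, ∀ x ∈ Ioo 0 a, HasDerivAt (z · x) (zt t x) t)
    (hzx : ∀ t ∈ Ioc 0 T, ∀ x ∈ Icc 0 a, HasDerivWithinAt (z t) (zx t x) (Icc 0 a) x)
    (hzxx : ∀ t ∈ Ioc 0 T, ∀ x ∈ Ioo 0 a, HasDerivAt (zx t) (zxx t x) x)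
    (hsub : ∀ t ∈ Ioc 0 T, ∀ x ∈ Ioo 0 a, zt t x ≤ d * zxx t x - l * z t x)
    (hzx0 : ∀ t ∈ Ioc 0 T, 0 < zx t 0) (hzxa : ∀ t ∈ Ioc 0 T, zx t a < 0)
    (hinit : ∀ x ∈ Icc 0 a, z 0 x ≤ 0) :
    ∀ t ∈ Icc 0 T, ∀ x ∈ Icc 0 a, z t x ≤ 0 := by
  intro t ht x hx
  obtain ⟨⟨t₀, x₀⟩, ⟨ht₀, hx₀⟩, hmax⟩ :=
    (isCompact_Icc.prod isCompact_Icc).exists_isMaxOn ⟨(t, x), ht, hx⟩ hz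
  suffices z t₀ x₀ ≤ 0 from (isMaxOn_iff.mp hmax (t, x) ⟨ht, hx⟩).trans this
  by_contra! hpos
  have ht₀' : t₀ ∈ Ioc 0 T :=
    ⟨ht₀.1.lt_of_ne (by rintro rfl; linarith [hinit x₀ hx₀]), ht₀.2⟩
  have hslice : IsMaxOn (z t₀) (Icc 0 a) x₀ := fun y hy =>
    isMaxOn_iff.mp hmax (t₀, y) ⟨ht₀, hy⟩
  have hx₀' : x₀ ∈ Ioo 0 a := by
    refine ⟨hx₀.1.lt_of_ne ?_, hx₀.2.lt_of_ne ?_⟩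
    · rintro rfl
      exact (hzx0 t₀ ht₀').not_ge
        (hslice.nonpos_of_hasDerivWithinAt_Icc_left (hzx t₀ ht₀' 0 hx₀) ha)
    · rintro rfl
      exact (hzxa t₀ ht₀').not_ge
        (hslice.nonneg_of_hasDerivWithinAt_Icc_right (hzx t₀ ht₀' x₀ hx₀) ha)
  have htime : 0 ≤ zt t₀ x₀ :=
    IsMaxOn.nonneg_of_hasDerivWithinAt_Icc_right
      (fun s hs => isMaxOn_iff.mp hmax (s, x₀) ⟨⟨hs.1, hs.2.trans ht₀.2⟩, hx₀⟩)
      (hzt t₀ ht₀' x₀ hx₀').hasDerivWithinAt ht₀'.1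
  have hspace : zxx t₀ x₀ ≤ 0 := by
    refine (hslice.isLocalMax (Icc_mem_nhds hx₀'.1 hx₀'.2)).hasDerivAt_deriv_nonpos ?_
      (hzxx t₀ ht₀' x₀ hx₀')
    filter_upwards [Ioo_mem_nhds hx₀'.1 hx₀'.2] with y hy
    exact (hzx t₀ ht₀' y (Ioo_subset_Icc_self hy)).hasDerivAt (Icc_mem_nhds hy.1 hy.2)
  nlinarith [hsub t₀ ht₀' x₀ hx₀', mul_nonpos_of_nonneg_of_nonpos hd hspace, mul_pos hl hpos]

def IsDampedHeatSolution (d l : ℝ) (Ψ Ψx Ψxx : ℝ → ℝ → ℝ) : Prop :=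
  ∀ t x, HasDerivAt (Ψ · x) (d * Ψxx t x - l * Ψ t x) t ∧ HasDerivAt (Ψ t) (Ψx t x) x ∧
    HasDerivAt (Ψx t) (Ψxx t x) x

namespace IsDampedHeatSolution

variable {d l : ℝ} {Ψ Ψx Ψxx Φ Φx Φxx : ℝ → ℝ → ℝ}

theorem of_exp_mul {φ φ' φ'' : ℝ → ℝ} {κ : ℝ} (hφ : ∀ x, HasDerivAt φ (φ' x) x)
    (hφ' : ∀ x, HasDerivAt φ' (φ'' x) x) (hκ : ∀ x, φ'' x = κ * φ x) :
    IsDampedHeatSolution d l (fun t x => exp ((d * κ - l) * t) * φ x)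
      (fun t x => exp ((d * κ - l) * t) * φ' x) (fun t x => exp ((d * κ - l) * t) * φ'' x) := by
  intro t x
  refine ⟨?_, (hφ x).const_mul _, (hφ' x).const_mul _⟩
  refine ((((hasDerivAt_id t).const_mul (d * κ - l)).exp).mul_const (φ x)).congr_deriv ?_
  simp only [hκ, id]
  ring

theorem const_mul (h : IsDampedHeatSolution d l Ψ Ψx Ψxx) (c : ℝ) :
    IsDampedHeatSolution d l (fun t x => c * Ψ t x) (fun t x => c * Ψx t x)
      (fun t x => c * Ψxx t x) := by
  intro t x
  obtain ⟨ht, hx, hxx⟩ := h t x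
  refine ⟨?_, hx.const_mul c, hxx.const_mul c⟩
  exact (ht.const_mul c).congr_deriv (by ring)

theorem add (hΨ : IsDampedHeatSolution d l Ψ Ψx Ψxx) (hΦ : IsDampedHeatSolution d l Φ Φx Φxx) :
    IsDampedHeatSolution d l (fun t x => Ψ t x + Φ t x) (fun t x => Ψx t x + Φx t x)
      (fun t x => Ψxx t x + Φxx t x) := by
  intro t x
  obtain ⟨hΨt, hΨx, hΨxx⟩ := hΨ t x
  obtain ⟨hΦt, hΦx, hΦxx⟩ := hΦ t x
  refine ⟨?_, hΨx.add hΦx, hΨxx.add hΦxx⟩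
  exact (hΨt.add hΦt).congr_deriv (by ring)

theorem sum {ι : Type*} (s : Finset ι) {Ψ Ψx Ψxx : ι → ℝ → ℝ → ℝ}
    (h : ∀ i ∈ s, IsDampedHeatSolution d l (Ψ i) (Ψx i) (Ψxx i)) :
    IsDampedHeatSolution d l (fun t x => ∑ i ∈ s, Ψ i t x) (fun t x => ∑ i ∈ s, Ψx i t x)
      (fun t x => ∑ i ∈ s, Ψxx i t x) := by
  intro t x
  refine ⟨?_, HasDerivAt.fun_sum fun i hi => (h i hi t x).2.1,
    HasDerivAt.fun_sum fun i hi => (h i hi t x).2.2⟩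
  refine (HasDerivAt.fun_sum fun i hi => (h i hi t x).1).congr_deriv ?_
  rw [Finset.mul_sum, Finset.mul_sum, ← Finset.sum_sub_distrib]

end IsDampedHeatSolution

theorem isDampedHeatSolution_cos (d l ω : ℝ) :
    IsDampedHeatSolution d l (fun t x => exp ((d * -ω ^ 2 - l) * t) * cos (ω * x))
      (fun t x => exp ((d * -ω ^ 2 - l) * t) * (-sin (ω * x) * ω))
      (fun t x => exp ((d * -ω ^ 2 - l) * t) * (-(cos (ω * x) * ω) * ω)) := by
  have hlin : ∀ x, HasDerivAt (fun y => ω * y) ω x := fun x => by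
    simpa using (hasDerivAt_id x).const_mul ω
  exact IsDampedHeatSolution.of_exp_mul (fun x => (hlin x).cos)
    (fun x => (hlin x).sin.neg.mul_const ω) (fun x => by ring)

theorem isDampedHeatSolution_cosh (d l c : ℝ) :
    IsDampedHeatSolution d l (fun t x => exp ((d - l) * t) * cosh (x - c))
      (fun t x => exp ((d - l) * t) * sinh (x - c))
      (fun t x => exp ((d - l) * t) * cosh (x - c)) := by
  have hlin : ∀ x, HasDerivAt (fun y => y - c) 1 x := fun x => (hasDerivAt_id x).sub_const c
  simpa only [mul_one] using IsDampedHeatSolution.of_exp_mul (d := d) (l := l)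
    (fun x => by simpa using (hlin x).cosh) (fun x => by simpa using (hlin x).sinh)
    (fun x => (one_mul (cosh (x - c))).symm)

theorem le_of_isDampedHeatSolution {d l a : ℝ} (hd : 0 ≤ d) (hl : 0 < l) (ha : 0 < a)
    {v vt vx vxx Ψ Ψx Ψxx : ℝ → ℝ → ℝ}
    (hv : ContinuousOn (fun p : ℝ × ℝ => v p.1 p.2) (Ici 0 ×ˢ Icc 0 a))
    (hvt : ∀ t > (0 : ℝ), ∀ x ∈ Ioo 0 a, HasDerivAt (v · x) (vt t x) t)
    (hvx : ∀ t > (0 : ℝ), ∀ x ∈ Icc 0 a, HasDerivWithinAt (v t) (vx t x) (Icc 0 a) x)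
    (hvxx : ∀ t > (0 : ℝ), ∀ x ∈ Ioo 0 a, HasDerivAt (vx t) (vxx t x) x)
    (hsub : ∀ t > (0 : ℝ), ∀ x ∈ Ioo 0 a, vt t x ≤ d * vxx t x - l * v t x)
    (hneu0 : ∀ t > (0 : ℝ), vx t 0 = 0) (hneua : ∀ t > (0 : ℝ), vx t a = 0)
    (hΨ : IsDampedHeatSolution d l Ψ Ψx Ψxx) (hΨ_cont : Continuous fun p : ℝ × ℝ => Ψ p.1 p.2)
    (hΨ0 : ∀ t, Ψx t 0 < 0) (hΨa : ∀ t, 0 < Ψx t a) (hinit : ∀ x ∈ Icc 0 a, v 0 x ≤ Ψ 0 x) :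
    ∀ t ≥ (0 : ℝ), ∀ x ∈ Icc 0 a, v t x ≤ Ψ t x := by
  intro T hT x hx
  have := dampedHeat_subsolution_nonpos (T := T) (z := fun t x => v t x - Ψ t x)
    (zt := fun t x => vt t x - (d * Ψxx t x - l * Ψ t x)) (zx := fun t x => vx t x - Ψx t x)
    (zxx := fun t x => vxx t x - Ψxx t x) hd hl ha
    ((hv.mono (prod_mono Icc_subset_Ici_self subset_rfl)).sub hΨ_cont.continuousOn)
    (fun t ht x hx => (hvt t ht.1 x hx).sub (hΨ t x).1)
    (fun t ht x hx => (hvx t ht.1 x hx).sub (hΨ t x).2.1.hasDerivWithinAt)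
    (fun t ht x hx => (hvxx t ht.1 x hx).sub (hΨ t x).2.2)
    (fun t ht x hx => by linarith [hsub t ht.1 x hx])
    (fun t ht => by linarith [hneu0 t ht.1, hΨ0 t]) (fun t ht => by linarith [hneua t ht.1, hΨa t])
    (fun x hx => by linarith [hinit x hx]) T ⟨hT, le_rfl⟩ x hx
  linarith

def cosineSpan : Submodule ℝ (ℝ → ℝ) :=
  Submodule.span ℝ (range fun k : ℕ => fun θ : ℝ => cos (k * θ))

theorem cos_nat_mul_mem_cosineSpan (k : ℕ) : (fun θ : ℝ => cos (k * θ)) ∈ cosineSpan :=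
  Submodule.subset_span ⟨k, rfl⟩

theorem cos_mul_mem_cosineSpan {f : ℝ → ℝ} (hf : f ∈ cosineSpan) : cos * f ∈ cosineSpan := by
  suffices cosineSpan ≤ cosineSpan.comap (LinearMap.mulLeft ℝ cos) from this hf
  refine Submodule.span_le.mpr ?_
  rintro _ ⟨k, rfl⟩
  show cos * (fun θ : ℝ => cos (k * θ)) ∈ cosineSpan
  rcases k with _ | m
  · convert cos_nat_mul_mem_cosineSpan 1 using 1
    ext θ
    simp
  · -- `2 cos θ cos((m+1)θ) = cos((m+2)θ) + cos(mθ)`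
    have h : cos * (fun θ : ℝ => cos ((m + 1 : ℕ) * θ))
        = (1 / 2 : ℝ) • ((fun θ : ℝ => cos ((m + 2 : ℕ) * θ)) + fun θ : ℝ => cos (m * θ)) := by
      ext θ
      simp only [Pi.mul_apply, Pi.smul_apply, Pi.add_apply, smul_eq_mul]
      push_cast
      rw [show ((m : ℝ) + 2) * θ = (m + 1) * θ + θ by ring,
        show (m : ℝ) * θ = (m + 1) * θ - θ by ring, cos_add, cos_sub]
      ring
    rw [h]
    exact cosineSpan.smul_mem _
      (cosineSpan.add_mem (cos_nat_mul_mem_cosineSpan _) (cos_nat_mul_mem_cosineSpan _))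

theorem cos_pow_mem_cosineSpan (n : ℕ) : cos ^ n ∈ cosineSpan := by
  induction n with
  | zero =>
    have h : cos ^ 0 = fun θ : ℝ => cos ((0 : ℕ) * θ) := by ext θ; simp
    exact h ▸ cos_nat_mul_mem_cosineSpan 0
  | succ n ih => rw [pow_succ']; exact cos_mul_mem_cosineSpan ih

theorem exists_sum_cos_eq_eval_cos (p : ℝ[X]) :
    ∃ (s : Finset ℕ) (b : ℕ → ℝ), ∀ θ, p.eval (cos θ) = ∑ k ∈ s, b k * cos (k * θ) := by
  have hp : (fun θ => p.eval (cos θ)) ∈ cosineSpan := by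
    have : (fun θ => p.eval (cos θ))
        = ∑ n ∈ Finset.range (p.natDegree + 1), p.coeff n • cos ^ n := by
      ext θ
      simp [eval_eq_sum_range, Finset.sum_apply]
    rw [this]
    exact cosineSpan.sum_mem fun n _ => cosineSpan.smul_mem _ (cos_pow_mem_cosineSpan n)
  obtain ⟨c, hc⟩ := Finsupp.mem_span_range_iff_exists_finsupp.mp hp
  refine ⟨c.support, c, fun θ => ?_⟩
  rw [← congrFun hc θ, Finsupp.sum, Finset.sum_apply]
  rfl

theorem exists_sum_cos_near {a ε : ℝ} (ha : 0 < a) {f : ℝ → ℝ} (hf : ContinuousOn f (Icc 0 a))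
    (hε : 0 < ε) :
    ∃ (s : Finset ℕ) (b : ℕ → ℝ),
      ∀ x ∈ Icc 0 a, |∑ k ∈ s, b k * cos (k * (π / a) * x) - f x| < ε := by
  -- approximate `f ∘ (a/π) arccos` on `[-1, 1]` by a polynomial and substitute `y = cos (π x / a)`
  have hmaps : MapsTo (fun y => a / π * arccos y) (Icc (-1) 1) (Icc 0 a) := by
    intro y _
    refine ⟨by have := arccos_nonneg y; positivity, ?_⟩
    calc a / π * arccos y ≤ a / π * π := by gcongr; exact arccos_le_pi y
      _ = a := by field_simp
  obtain ⟨p, hp⟩ := exists_polynomial_near_of_continuousOn (-1) 1 _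
    (hf.comp (by fun_prop) hmaps) ε hε
  obtain ⟨s, b, hsb⟩ := exists_sum_cos_eq_eval_cos p
  refine ⟨s, b, fun x hx => ?_⟩
  have hθ : π / a * x ∈ Icc 0 π := by
    refine ⟨by have := hx.1; positivity, ?_⟩
    calc π / a * x ≤ π / a * a := by gcongr; exact hx.2
      _ = π := by field_simp
  have := hp (cos (π / a * x)) ⟨neg_one_le_cos _, cos_le_one _⟩
  rw [Function.comp_apply, arccos_cos hθ.1 hθ.2, hsb] at this
  convert this using 3
  · simp only [mul_assoc]
  · field_simp

theorem integral_cos_nat_mul_pi_div (a : ℝ) {k : ℕ} (hk : k ≠ 0) :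
    ∫ x in (0 : ℝ)..a, cos (k * (π / a) * x) = 0 := by
  rcases eq_or_ne a 0 with rfl | ha
  · simp
  have hc : (k : ℝ) * (π / a) ≠ 0 := by positivity
  rw [intervalIntegral.integral_comp_mul_left (fun x => cos x) hc, integral_cos,
    show (k : ℝ) * (π / a) * a = k * π by field_simp]
  simp [sin_nat_mul_pi]

theorem integral_sum_cos_heat_mode (d l t a : ℝ) (s : Finset ℕ) (b : ℕ → ℝ) :
    ∫ x in (0 : ℝ)..a,
        ∑ k ∈ s, b k * (exp ((d * -(k * (π / a)) ^ 2 - l) * t) * cos (k * (π / a) * x))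
      = exp (-l * t) * ∫ x in (0 : ℝ)..a, ∑ k ∈ s, b k * cos (k * (π / a) * x) := by
  have hint : ∀ g : ℝ → ℝ, Continuous g → IntervalIntegrable g MeasureTheory.volume 0 a :=
    fun g hg => hg.intervalIntegrable _ _
  rw [intervalIntegral.integral_finsetSum fun k _ => hint _ (by fun_prop),
    intervalIntegral.integral_finsetSum fun k _ => hint _ (by fun_prop), Finset.mul_sum]
  refine Finset.sum_congr rfl fun k _ => ?_
  simp only [intervalIntegral.integral_const_mul]
  -- only the constant mode has nonzero mean, and it decays exactly like `exp (-l t)`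
  rcases eq_or_ne k 0 with rfl | hk
  · simp only [CharP.cast_eq_zero, zero_mul]
    ring_nf
  · rw [integral_cos_nat_mul_pi_div a hk]
    ring

theorem integral_le_integral_add_mul {f g : ℝ → ℝ} {a η : ℝ} (ha : 0 ≤ a)
    (hf : IntervalIntegrable f MeasureTheory.volume 0 a)
    (hg : IntervalIntegrable g MeasureTheory.volume 0 a) (h : ∀ x ∈ Icc 0 a, g x ≤ f x + η) :
    ∫ x in (0 : ℝ)..a, g x ≤ (∫ x in (0 : ℝ)..a, f x) + η * a := by
  calc _ ≤ ∫ x in (0 : ℝ)..a, (f x + η) :=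
        intervalIntegral.integral_mono_on ha hg (hf.add intervalIntegrable_const) h
    _ = _ := by simp [intervalIntegral.integral_add hf intervalIntegrable_const, mul_comm]

theorem exists_isDampedHeatSolution_ge (d l : ℝ) {a ε : ℝ} (t : ℝ) (ha : 0 < a) (hε : 0 < ε)
    {f : ℝ → ℝ} (hf : ContinuousOn f (Icc 0 a)) :
    ∃ Ψ Ψx Ψxx : ℝ → ℝ → ℝ, IsDampedHeatSolution d l Ψ Ψx Ψxx ∧
      Continuous (fun p : ℝ × ℝ => Ψ p.1 p.2) ∧ (∀ τ, Ψx τ 0 < 0) ∧ (∀ τ, 0 < Ψx τ a) ∧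
      (∀ x ∈ Icc 0 a, f x ≤ Ψ 0 x) ∧
      ∫ x in (0 : ℝ)..a, Ψ t x ≤ exp (-l * t) * (∫ x in (0 : ℝ)..a, f x) + ε := by
  obtain ⟨η, hη, hηε⟩ := exists_pos_mul_lt (half_pos hε) (exp (-l * t) * a)
  obtain ⟨s, b, hsb⟩ := exists_sum_cos_near (f := fun x => f x + η / 2) ha
    (hf.add continuousOn_const) (half_pos hη)
  set K := ∫ x in (0 : ℝ)..a, exp ((d - l) * t) * cosh (x - a / 2)
  obtain ⟨δ, hδ, hδε⟩ := exists_pos_mul_lt (half_pos hε) K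
  have hsol := (IsDampedHeatSolution.sum s fun k _ =>
    (isDampedHeatSolution_cos d l (k * (π / a))).const_mul (b k)).add
      ((isDampedHeatSolution_cosh d l (a / 2)).const_mul δ)
  refine ⟨_, _, _, hsol, by fun_prop, fun τ => ?_, fun τ => ?_, fun x hx => ?_, ?_⟩
  · have : sinh (0 - a / 2) < 0 := sinh_neg_iff.mpr (by linarith)
    simp only [mul_zero, sin_zero, neg_zero, zero_mul, mul_zero, Finset.sum_const_zero, zero_add]
    exact mul_neg_of_pos_of_neg hδ (mul_neg_of_pos_of_neg (exp_pos _) this)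
  · have : 0 < sinh (a - a / 2) := sinh_pos_iff.mpr (by linarith)
    have hsin : ∀ k : ℕ, sin (k * (π / a) * a) = 0 := fun k => by
      rw [show (k : ℝ) * (π / a) * a = k * π by field_simp, sin_nat_mul_pi]
    simp only [hsin, neg_zero, zero_mul, mul_zero, Finset.sum_const_zero, zero_add]
    exact mul_pos hδ (mul_pos (exp_pos _) this)
  · have := (abs_lt.mp (hsb x hx)).1
    have := cosh_pos (x - a / 2)
    simp only [mul_zero, exp_zero, one_mul]
    nlinarith
  · have hfi : IntervalIntegrable f MeasureTheory.volume 0 a :=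
      (hf.mono (uIcc_of_le ha.le).subset).intervalIntegrable
    have hsum := integral_le_integral_add_mul (η := η) ha.le hfi
      ((by fun_prop : Continuous fun x => ∑ k ∈ s, b k * cos (k * (π / a) * x)).intervalIntegrable
        _ _) fun x hx => by linarith [(abs_lt.mp (hsb x hx)).2]
    rw [intervalIntegral.integral_add ((by fun_prop : Continuous _).intervalIntegrable _ _)
        ((by fun_prop : Continuous _).intervalIntegrable _ _),
      intervalIntegral.integral_const_mul, integral_sum_cos_heat_mode d l t a]
    nlinarith [mul_le_mul_of_nonneg_left hsum (exp_pos (-l * t)).le]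

theorem integral_le_of_dampedHeat_subsolution {d l a : ℝ} (hd : 0 ≤ d) (hl : 0 < l)
    (ha : 0 < a) {v vt vx vxx : ℝ → ℝ → ℝ}
    (hv : ContinuousOn (fun p : ℝ × ℝ => v p.1 p.2) (Ici 0 ×ˢ Icc 0 a))
    (hvt : ∀ t > (0 : ℝ), ∀ x ∈ Ioo 0 a, HasDerivAt (v · x) (vt t x) t)
    (hvx : ∀ t > (0 : ℝ), ∀ x ∈ Icc 0 a, HasDerivWithinAt (v t) (vx t x) (Icc 0 a) x)
    (hvxx : ∀ t > (0 : ℝ), ∀ x ∈ Ioo 0 a, HasDerivAt (vx t) (vxx t x) x)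
    (hsub : ∀ t > (0 : ℝ), ∀ x ∈ Ioo 0 a, vt t x ≤ d * vxx t x - l * v t x)
    (hneu0 : ∀ t > (0 : ℝ), vx t 0 = 0) (hneua : ∀ t > (0 : ℝ), vx t a = 0) :
    ∀ t ≥ (0 : ℝ), ∫ x in (0 : ℝ)..a, v t x ≤ (∫ x in (0 : ℝ)..a, v 0 x) * exp (-l * t) := by
  have hslice : ∀ t ≥ (0 : ℝ), ContinuousOn (v t) (Icc 0 a) := fun t ht =>
    hv.comp (Continuous.continuousOn (by fun_prop : Continuous fun x => (t, x)))
      fun x hx => ⟨ht, hx⟩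
  intro t ht
  refine le_of_forall_pos_le_add fun ε hε => ?_
  obtain ⟨Ψ, Ψx, Ψxx, hΨ, hΨ_cont, hΨ0, hΨa, hinit, hint⟩ :=
    exists_isDampedHeatSolution_ge d l t ha hε (hslice 0 le_rfl)
  have hle := le_of_isDampedHeatSolution hd hl ha hv hvt hvx hvxx hsub hneu0 hneua hΨ hΨ_cont
    hΨ0 hΨa hinit t ht
  calc ∫ x in (0 : ℝ)..a, v t x ≤ ∫ x in (0 : ℝ)..a, Ψ t x :=
        intervalIntegral.integral_mono_on ha.le
          ((hslice t ht).mono (uIcc_of_le ha.le).subset).intervalIntegrable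
          ((by fun_prop : Continuous (Ψ t)).intervalIntegrable _ _) hle
    _ ≤ _ := by linarith

theorem predator_extinction_1D_general
    (dv α γ a : ℝ) (hdv : 0 < dv) (hα : 0 < α)
    (ha : 0 < a) (hαγ : α < γ)
    (u v vx vxx : ℝ → ℝ → ℝ)
    (hv_cont : ContinuousOn (fun p : ℝ × ℝ => v p.1 p.2) (Set.Ici 0 ×ˢ Set.Icc 0 a))
    -- `v(t,·)` is C² in x for each `t > 0`:
    (hvx : ∀ t > (0:ℝ), ∀ x ∈ Set.Icc (0:ℝ) a,
      HasDerivWithinAt (v t) (vx t x) (Set.Icc 0 a) x)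
    (hvxx : ∀ t > (0:ℝ), ∀ x ∈ Set.Ioo (0:ℝ) a, HasDerivAt (vx t) (vxx t x) x)
    -- predator equation `∂ₜ v = d_v ∂ₓₓ v − γ v + α u v` for `t > 0`, `x ∈ (0,a)`:
    (hpde : ∀ t > (0:ℝ), ∀ x ∈ Set.Ioo (0:ℝ) a,
      HasDerivAt (fun τ => v τ x) (dv * vxx t x - γ * v t x + α * u t x * v t x) t)
    -- Neumann boundary conditions:
    (hneu0 : ∀ t > (0:ℝ), vx t 0 = 0) (hneua : ∀ t > (0:ℝ), vx t a = 0)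
    -- bounds `0 ≤ u ≤ 1` and `v ≥ 0`:
    (hu01 : ∀ t ≥ (0:ℝ), ∀ x ∈ Set.Icc (0:ℝ) a, u t x ∈ Set.Icc (0:ℝ) 1)
    (hv0 : ∀ t ≥ (0:ℝ), ∀ x ∈ Set.Icc (0:ℝ) a, 0 ≤ v t x) :
    (∀ t ≥ (0:ℝ),
      (∫ x in (0:ℝ)..a, v t x) ≤ (∫ x in (0:ℝ)..a, v 0 x) * Real.exp (-(γ - α) * t)) ∧
    Filter.Tendsto (fun t => ∫ x in (0:ℝ)..a, v t x) Filter.atTop (nhds 0) := by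
  have hpredation : ∀ t > (0 : ℝ), ∀ x ∈ Ioo 0 a,
      dv * vxx t x - γ * v t x + α * u t x * v t x ≤ dv * vxx t x - (γ - α) * v t x := by
    intro t ht x hx
    have hu := (hu01 t ht.le x (Ioo_subset_Icc_self hx)).2
    nlinarith [mul_nonneg hα.le (hv0 t ht.le x (Ioo_subset_Icc_self hx))]
  have hbound := integral_le_of_dampedHeat_subsolution hdv.le (sub_pos.mpr hαγ) ha
    hv_cont hpde hvx hvxx hpredation hneu0 hneua
  refine ⟨hbound, tendsto_of_tendsto_of_tendsto_of_le_of_le' tendsto_const_nhds ?_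
    ((eventually_ge_atTop 0).mono fun t ht => intervalIntegral.integral_nonneg ha.le (hv0 t ht))
    ((eventually_ge_atTop 0).mono hbound)⟩
  simpa using (tendsto_exp_comp_nhds_zero.mpr
    (tendsto_id.const_mul_atTop_of_neg (by linarith : -(γ - α) < 0))).const_mul
      (∫ x in (0 : ℝ)..a, v 0 x)

/-- **Predator extinction (1D case of Proposition 1.1).**
The predator density `v` diffuses on `(0,a)` with Neumann boundary conditions,
dies at rate `γ` and grows through predation `α u v` with `0 ≤ u ≤ 1`.
If `α < γ` then the total predator population `V(t) = ∫₀ᵃ v(t,x) dx` satisfies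
`V(t) ≤ V(0) exp(−(γ−α) t)` and tends to `0` as `t → ∞`. -/
theorem predator_extinction_1D
    (dv α β γ a : ℝ) (hdv : 0 < dv) (hα : 0 < α) (hβ : 0 < β) (hγ : 0 < γ)
    (ha : 0 < a) (hαγ : α < γ)
    (u v vx vxx : ℝ → ℝ → ℝ)
    (hu_cont : ContinuousOn (fun p : ℝ × ℝ => u p.1 p.2) (Set.Ici 0 ×ˢ Set.Icc 0 a))
    (hv_cont : ContinuousOn (fun p : ℝ × ℝ => v p.1 p.2) (Set.Ici 0 ×ˢ Set.Icc 0 a))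
    -- `v(t,·)` is C² in x for each `t > 0`:
    (hvx : ∀ t > (0:ℝ), ∀ x ∈ Set.Icc (0:ℝ) a,
      HasDerivWithinAt (v t) (vx t x) (Set.Icc 0 a) x)
    (hvxx : ∀ t > (0:ℝ), ∀ x ∈ Set.Ioo (0:ℝ) a, HasDerivAt (vx t) (vxx t x) x)
    -- predator equation `∂ₜ v = d_v ∂ₓₓ v − γ v + α u v` for `t > 0`, `x ∈ (0,a)`:
    (hpde : ∀ t > (0:ℝ), ∀ x ∈ Set.Ioo (0:ℝ) a,
      HasDerivAt (fun τ => v τ x) (dv * vxx t x - γ * v t x + α * u t x * v t x) t)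
    -- Neumann boundary conditions:
    (hneu0 : ∀ t > (0:ℝ), vx t 0 = 0) (hneua : ∀ t > (0:ℝ), vx t a = 0)
    -- bounds `0 ≤ u ≤ 1` and `v ≥ 0`:
    (hu01 : ∀ t ≥ (0:ℝ), ∀ x ∈ Set.Icc (0:ℝ) a, u t x ∈ Set.Icc (0:ℝ) 1)
    (hv0 : ∀ t ≥ (0:ℝ), ∀ x ∈ Set.Icc (0:ℝ) a, 0 ≤ v t x) :
    (∀ t ≥ (0:ℝ),
      (∫ x in (0:ℝ)..a, v t x) ≤ (∫ x in (0:ℝ)..a, v 0 x) * Real.exp (-(γ - α) * t)) ∧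
    Filter.Tendsto (fun t => ∫ x in (0:ℝ)..a, v t x) Filter.atTop (nhds 0) :=
  predator_extinction_1D_general dv α γ a hdv hα ha hαγ u v vx vxx hv_cont hvx hvxx hpde hneu0 hneua
    hu01 hv0
end

section
/- Let d_u > 0, L > 0, and let f be a bistable nonlinearity. Suppose u : [0,L] → ℝ is a C² solution of the Neumann problem −d_u u'' = f(u) on (0,L) with u'(0) = u'(L) = 0, and suppose θ < u(x) ≤ 1 for all x ∈ [0,L]. Then u is identically equal to 1. -/
/-!
Since `θ < u ≤ 1`, bistability gives `f ∘ u ≥ 0`, so `u'' ≤ 0` and `u'` is antitone;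
vanishing at both ends, `u'` vanishes identically. Hence `u` is a constant `c` with `u'' = 0`,
so `f c = 0`, and the only zero of `f` in `(θ, 1]` is `1`.
-/

open Set

structure Bistable (f : ℝ → ℝ) (θ : ℝ) : Prop where
  cont : ContinuousOn f (Set.Icc 0 1)
  θ_mem : θ ∈ Set.Ioo (0:ℝ) 1
  f0 : f 0 = 0
  fθ : f θ = 0
  f1 : f 1 = 0
  neg : ∀ s ∈ Set.Ioo (0:ℝ) θ, f s < 0
  pos : ∀ s ∈ Set.Ioo θ (1:ℝ), 0 < f s
  int_pos : 0 < ∫ s in (0:ℝ)..1, f s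

namespace Bistable

variable {f : ℝ → ℝ} {θ s : ℝ}

theorem apply_nonneg (hf : Bistable f θ) (hθs : θ < s) (hs1 : s ≤ 1) : 0 ≤ f s := by
  rcases hs1.lt_or_eq with hs1 | rfl
  · exact (hf.pos s ⟨hθs, hs1⟩).le
  · exact hf.f1.ge

theorem eq_one_of_apply_eq_zero (hf : Bistable f θ) (hθs : θ < s) (hs1 : s ≤ 1)
    (hfs : f s = 0) : s = 1 := by
  by_contra hne
  exact (hf.pos s ⟨hθs, hs1.lt_of_ne hne⟩).ne' hfs

end Bistable

section Interval

variable {g g' : ℝ → ℝ} {a b : ℝ}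

theorem eqOn_zero_of_hasDerivWithinAt_nonpos_of_boundary
    (hg : ∀ x ∈ Icc a b, HasDerivWithinAt g (g' x) (Icc a b) x)
    (hg' : ∀ x ∈ Ioo a b, g' x ≤ 0) (ha : g a = 0) (hb : g b = 0) :
    EqOn g 0 (Icc a b) := by
  have hanti : AntitoneOn g (Icc a b) := by
    refine antitoneOn_of_hasDerivWithinAt_nonpos (f' := g') (convex_Icc a b)
      (fun x hx => (hg x hx).continuousWithinAt) ?_ ?_ <;> rw [interior_Icc]
    · exact fun x hx => (hg x (Ioo_subset_Icc_self hx)).mono Ioo_subset_Icc_self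
    · exact hg'
  intro x hx
  have hax : g x ≤ g a := hanti (left_mem_Icc.2 (hx.1.trans hx.2)) hx hx.1
  have hxb : g b ≤ g x := hanti hx (right_mem_Icc.2 (hx.1.trans hx.2)) hx.2
  rw [Pi.zero_apply]
  linarith

theorem constant_of_hasDerivWithinAt_eqOn_zero
    (hg : ∀ x ∈ Icc a b, HasDerivWithinAt g (g' x) (Icc a b) x) (hg' : EqOn g' 0 (Icc a b)) :
    ∀ x ∈ Icc a b, g x = g a :=
  constant_of_has_deriv_right_zero (fun x hx => (hg x hx).continuousWithinAt) fun x hx => by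
    simpa only [hg' (Ico_subset_Icc_self hx), Pi.zero_apply] using
      (hg x (Ico_subset_Icc_self hx)).mono_of_mem_nhdsWithin (Icc_mem_nhdsGE_of_mem hx)

theorem HasDerivWithinAt.eq_zero_of_eqOn_zero {x d : ℝ} (hg : HasDerivWithinAt g d (Icc a b) x)
    (hab : a < b) (hx : x ∈ Icc a b) (hg0 : EqOn g 0 (Icc a b)) : d = 0 :=
  (uniqueDiffOn_Icc hab x hx).eq_deriv _ hg <|
    (hasDerivWithinAt_const x _ (0 : ℝ)).congr_of_mem hg0 hx

end Interval

theorem neumann_solution_above_theta_is_one_general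
    (du L : ℝ) (hdu : 0 < du) (hL : 0 < L)
    (f : ℝ → ℝ) (θ : ℝ) (hf : Bistable f θ)
    (u u' u'' : ℝ → ℝ)
    (hd1 : ∀ x ∈ Set.Icc 0 L, HasDerivWithinAt u (u' x) (Set.Icc 0 L) x)
    (hd2 : ∀ x ∈ Set.Icc 0 L, HasDerivWithinAt u' (u'' x) (Set.Icc 0 L) x)
    (heq : ∀ x ∈ Set.Ioo (0:ℝ) L, -du * u'' x = f (u x))
    (hbc0 : u' 0 = 0) (hbcL : u' L = 0)
    (hbd : ∀ x ∈ Set.Icc (0:ℝ) L, θ < u x ∧ u x ≤ 1) :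
    ∀ x ∈ Set.Icc (0:ℝ) L, u x = 1 := by
  have hu''_nonpos : ∀ x ∈ Ioo 0 L, u'' x ≤ 0 := fun x hx => by
    obtain ⟨hθu, hu1⟩ := hbd x (Ioo_subset_Icc_self hx)
    nlinarith [heq x hx, hf.apply_nonneg hθu hu1]
  have hu'_zero : EqOn u' 0 (Icc 0 L) :=
    eqOn_zero_of_hasDerivWithinAt_nonpos_of_boundary hd2 hu''_nonpos hbc0 hbcL
  have hu_const := constant_of_hasDerivWithinAt_eqOn_zero hd1 hu'_zero
  have hmid : L / 2 ∈ Icc 0 L := ⟨by linarith, by linarith⟩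
  have hu''_mid : u'' (L / 2) = 0 :=
    (hd2 _ hmid).eq_zero_of_eqOn_zero hL hmid hu'_zero
  have hu_mid : u (L / 2) = 1 := by
    refine hf.eq_one_of_apply_eq_zero (hbd _ hmid).1 (hbd _ hmid).2 ?_
    rw [← heq (L / 2) ⟨by linarith, by linarith⟩, hu''_mid, mul_zero]
  intro x hx
  rw [hu_const x hx, ← hu_const _ hmid, hu_mid]

/-- **One-dimensional version of the final step of Lemma 2.5.**
A C² solution of the Neumann problem `−d_u u'' = f(u)` on `(0,L)`,
`u'(0) = u'(L) = 0`, which satisfies `θ < u ≤ 1` on `[0,L]` must be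
identically equal to `1`. -/
theorem neumann_solution_above_theta_is_one
    (du L : ℝ) (hdu : 0 < du) (hL : 0 < L)
    (f : ℝ → ℝ) (θ : ℝ) (hf : Bistable f θ)
    (u u' u'' : ℝ → ℝ)
    (hd1 : ∀ x ∈ Set.Icc 0 L, HasDerivWithinAt u (u' x) (Set.Icc 0 L) x)
    (hd2 : ∀ x ∈ Set.Icc 0 L, HasDerivWithinAt u' (u'' x) (Set.Icc 0 L) x)
    (hd2c : ContinuousOn u'' (Set.Icc 0 L))
    (heq : ∀ x ∈ Set.Ioo (0:ℝ) L, -du * u'' x = f (u x))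
    (hbc0 : u' 0 = 0) (hbcL : u' L = 0)
    (hbd : ∀ x ∈ Set.Icc (0:ℝ) L, θ < u x ∧ u x ≤ 1) :
    ∀ x ∈ Set.Icc (0:ℝ) L, u x = 1 :=
  neumann_solution_above_theta_is_one_general du L hdu hL f θ hf u u' u'' hd1 hd2 heq hbc0 hbcL hbd
end

section
/- Let d_u > 0, let f be a bistable nonlinearity, and let 0 < p < 1. Suppose u : [0,L] → ℝ is a C² solution of −d_u u'' = f(u) on (0,L) with u(0) = p, u'(L) = 0, satisfying 0 < u(x) < 1 for all x ∈ [0,L] and u(L) > θ'. Then u is strictly increasing: u'(x) > 0 for every x ∈ [0,L). -/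
open Set

/-
Along the solution the energy `d_u/2 · u'² + F(u)` is conserved, so it equals its value
`F(u(L)) > 0` at `L`. Since `F ≤ 0` on `(0, θ']` and `F` is strictly increasing on `[θ', 1)`,
for `s ∈ (0, 1)` we have `F(s) < F(u(L))` exactly when `s < u(L)`: hence `u ≤ u(L)`, with
equality precisely at the critical points of `u`. For `x < L`, the minimum of `u` on `[x, L]` is
below `u(L)`, since `u ≡ u(L)` would force `f(u(L)) = 0`; so it is attained neither at `L` nor
at an interior critical point, but at `x`, where therefore `u'(x) ≥ 0`, and `u'(x) ≠ 0` because
`u(x) < u(L)`.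
-/

open MeasureTheory Topology

theorem HasDerivAt.eq_zero_of_forall_mem_Ioo_eq {v : ℝ → ℝ} {v' a b c x : ℝ}
    (hv : HasDerivAt v v' x) (hx : x ∈ Ioo a b) (hc : ∀ y ∈ Ioo a b, v y = c) : v' = 0 :=
  hv.unique ((hasDerivAt_const x c).congr_of_eventuallyEq
    (Filter.eventually_of_mem (Ioo_mem_nhds hx.1 hx.2) hc))

theorem IsMinOn.hasDerivWithinAt_nonneg_of_left {u : ℝ → ℝ} {u' a b : ℝ} (hab : a < b)
    (hmin : IsMinOn u (Icc a b) a) (hu : HasDerivWithinAt u u' (Icc a b) a) : 0 ≤ u' := by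
  have h1 : (1 : ℝ) ∈ posTangentConeAt (Icc a b) a := one_mem_posTangentConeAt_iff_frequently.2
    (Filter.eventually_of_mem (Ioo_mem_nhdsGT hab) fun _ hy => Ioo_subset_Icc_self hy).frequently
  simpa using hmin.localize.hasFDerivWithinAt_nonneg hu.hasFDerivWithinAt h1

theorem pos_of_hasDerivWithinAt_of_isMaxOn_right {u u' : ℝ → ℝ} {a b : ℝ}
    (hu : ∀ x ∈ Icc a b, HasDerivWithinAt u (u' x) (Icc a b) x) (hmax : IsMaxOn u (Icc a b) b)
    (hcrit : ∀ x ∈ Ico a b, u' x = 0 → u x = u b)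
    (hnc : ∀ c ∈ Ico a b, ∃ y ∈ Ioo c b, u y ≠ u b) {x : ℝ} (hx : x ∈ Ico a b) :
    0 < u' x := by
  have hsub : Icc x b ⊆ Icc a b := Icc_subset_Icc_left hx.1
  obtain ⟨c, hc, hmin⟩ := isCompact_Icc.exists_isMinOn (nonempty_Icc.2 hx.2.le)
    fun y hy => ((hu y (hsub hy)).mono hsub).continuousWithinAt
  have hlt : u c < u b := by
    refine (hmin (right_mem_Icc.2 hx.2.le)).lt_of_ne fun hcb => ?_
    obtain ⟨y, hy, hne⟩ := hnc x hx
    exact hne (le_antisymm (hmax (hsub (Ioo_subset_Icc_self hy)))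
      (hcb ▸ hmin (Ioo_subset_Icc_self hy)))
  obtain rfl : c = x := by
    by_contra hcx
    have hc' : c ∈ Ioo x b := ⟨hc.1.lt_of_ne' hcx, hc.2.lt_of_ne (by rintro rfl; exact hlt.false)⟩
    have hderiv : u' c = 0 := (hmin.isLocalMin (Icc_mem_nhds hc'.1 hc'.2)).hasDerivAt_eq_zero
      ((hu c (hsub hc)).hasDerivAt (Icc_mem_nhds (hx.1.trans_lt hc'.1) hc'.2))
    exact hlt.ne (hcrit c ⟨hx.1.trans hc'.1.le, hc'.2⟩ hderiv)
  exact (hmin.hasDerivWithinAt_nonneg_of_left hx.2 ((hu _ (hsub hc)).mono hsub)).lt_of_ne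
    fun h => hlt.ne (hcrit _ hx h.symm)

section SecondOrderODE

variable {u u' u'' g G : ℝ → ℝ} {a b k : ℝ}

theorem energy_eq_energy_right
    (hu : ∀ x ∈ Icc a b, HasDerivWithinAt u (u' x) (Icc a b) x)
    (hu' : ∀ x ∈ Icc a b, HasDerivWithinAt u' (u'' x) (Icc a b) x)
    (hG : ∀ x ∈ Icc a b, HasDerivAt G (g (u x)) (u x))
    (heq : ∀ x ∈ Ioo a b, -k * u'' x = g (u x)) {x : ℝ} (hx : x ∈ Icc a b) :
    k / 2 * u' x ^ 2 + G (u x) = k / 2 * u' b ^ 2 + G (u b) := by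
  set E : ℝ → ℝ := fun y => k / 2 * u' y ^ 2 + G (u y)
  have hE : ∀ y ∈ Icc a b,
      HasDerivWithinAt E (k / 2 * (2 * u' y * u'' y) + g (u y) * u' y) (Icc a b) y := by
    intro y hy
    exact ((((hu' y hy).fun_pow 2).const_mul (k / 2)).fun_add
      ((hG y hy).comp_hasDerivWithinAt y (hu y hy))).congr_deriv (by ring)
  rcases hx.2.eq_or_lt with rfl | hxb
  · rfl
  have hsub : Icc x b ⊆ Icc a b := Icc_subset_Icc_left hx.1
  obtain ⟨c, hc, hslope⟩ := exists_hasDerivAt_eq_slope E _ hxb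
    (fun y hy => ((hE y (hsub hy)).mono hsub).continuousWithinAt) fun y hy =>
      (hE y (hsub (Ioo_subset_Icc_self hy))).hasDerivAt
        (Icc_mem_nhds (hx.1.trans_lt hy.1) hy.2)
  have hc' : c ∈ Ioo a b := ⟨hx.1.trans_lt hc.1, hc.2⟩
  have hzero : k / 2 * (2 * u' c * u'' c) + g (u c) * u' c = 0 := by
    linear_combination -(u' c) * heq c hc'
  rw [hzero, eq_comm, div_eq_zero_iff, sub_eq_zero] at hslope
  exact (hslope.resolve_right (sub_pos.2 hxb).ne').symm

theorem apply_eq_zero_of_const_on_Ioo (hab : a < b)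
    (hu : ∀ x ∈ Ioo a b, HasDerivAt u (u' x) x) (hu' : ∀ x ∈ Ioo a b, HasDerivAt u' (u'' x) x)
    (heq : ∀ x ∈ Ioo a b, -k * u'' x = g (u x)) {c : ℝ} (hc : ∀ x ∈ Ioo a b, u x = c) :
    g c = 0 := by
  obtain ⟨x, hx⟩ := nonempty_Ioo.2 hab
  have hu'0 : ∀ y ∈ Ioo a b, u' y = 0 := fun y hy =>
    (hu y hy).eq_zero_of_forall_mem_Ioo_eq hy hc
  rw [← hc x hx, ← heq x hx, (hu' x hx).eq_zero_of_forall_mem_Ioo_eq hx hu'0, mul_zero]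

end SecondOrderODE

namespace Bistable

variable {f : ℝ → ℝ} {θ : ℝ}

theorem intervalIntegrable (hf : Bistable f θ) {a b : ℝ} (ha : a ∈ Icc (0:ℝ) 1)
    (hb : b ∈ Icc (0:ℝ) 1) : IntervalIntegrable f volume a b :=
  (hf.cont.mono (uIcc_subset_Icc ha hb)).intervalIntegrable

theorem hasDerivAt_integral (hf : Bistable f θ) {s : ℝ} (hs : s ∈ Ioo (0:ℝ) 1) :
    HasDerivAt (fun t => ∫ r in (0:ℝ)..t, f r) (f s) s :=
  intervalIntegral.integral_hasDerivAt_right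
    (hf.intervalIntegrable (left_mem_Icc.2 zero_le_one) (Ioo_subset_Icc_self hs))
    ((hf.cont.mono Ioo_subset_Icc_self).stronglyMeasurableAtFilter isOpen_Ioo s hs)
    (hf.cont.continuousAt (Icc_mem_nhds hs.1 hs.2))

theorem nonpos_of_mem_Icc (hf : Bistable f θ) {s : ℝ} (hs : s ∈ Icc 0 θ) : f s ≤ 0 := by
  rcases hs.1.eq_or_lt with rfl | h0
  · exact hf.f0.le
  rcases hs.2.eq_or_lt with rfl | hθ
  · exact hf.fθ.le
  exact (hf.neg s ⟨h0, hθ⟩).le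

theorem integral_nonpos (hf : Bistable f θ) {s : ℝ} (hs : s ∈ Icc 0 θ) :
    ∫ r in (0:ℝ)..s, f r ≤ 0 := by
  simpa using intervalIntegral.integral_nonneg hs.1 fun r hr =>
    neg_nonneg.2 (hf.nonpos_of_mem_Icc ⟨hr.1, hr.2.trans hs.2⟩)

theorem strictMonoOn_integral (hf : Bistable f θ) :
    StrictMonoOn (fun t => ∫ r in (0:ℝ)..t, f r) (Ico θ 1) := by
  have hθ := hf.θ_mem
  refine strictMonoOn_of_hasDerivWithinAt_pos (f' := f) (convex_Ico θ 1) (fun s hs => ?_)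
    (fun s hs => ?_) (fun s hs => ?_)
  · exact (hf.hasDerivAt_integral ⟨hθ.1.trans_le hs.1, hs.2⟩).continuousAt.continuousWithinAt
  · rw [interior_Ico] at hs ⊢
    exact (hf.hasDerivAt_integral ⟨hθ.1.trans hs.1, hs.2⟩).hasDerivWithinAt
  · rw [interior_Ico] at hs
    exact hf.pos s hs

theorem integral_lt_integral_iff (hf : Bistable f θ) {θ' s t : ℝ} (hθθ' : θ ≤ θ')
    (hF : ∫ r in (0:ℝ)..θ', f r = 0) (hs : s ∈ Ico (0:ℝ) 1) (ht : t ∈ Ioo θ' 1) :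
    (∫ r in (0:ℝ)..s, f r) < ∫ r in (0:ℝ)..t, f r ↔ s < t := by
  have hmono := hf.strictMonoOn_integral
  have ht' : t ∈ Ico θ 1 := ⟨hθθ'.trans ht.1.le, ht.2⟩
  constructor
  · intro hlt
    by_contra! hts
    exact hlt.not_ge ((hmono.le_iff_le ht' ⟨ht'.1.trans hts, hs.2⟩).2 hts)
  · intro hst
    rcases le_or_gt s θ' with hsθ' | hθ's
    · have hθ'lt : ∫ r in (0:ℝ)..θ', f r < ∫ r in (0:ℝ)..t, f r :=
        hmono ⟨hθθ', ht.1.trans ht.2⟩ ht' ht.1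
      have hs_nonpos : ∫ r in (0:ℝ)..s, f r ≤ 0 := by
        rcases le_or_gt s θ with hsθ | hθs
        · exact hf.integral_nonpos ⟨hs.1, hsθ⟩
        · exact (hmono.monotoneOn ⟨hθs.le, hs.2⟩ ⟨hθθ', ht.1.trans ht.2⟩ hsθ').trans_eq hF
      linarith
    · exact hmono ⟨hθθ'.trans hθ's.le, hs.2⟩ ht' hst

theorem le_of_integral_le (hf : Bistable f θ) {θ' s t : ℝ} (hθθ' : θ ≤ θ')
    (hF : ∫ r in (0:ℝ)..θ', f r = 0) (hs : s ∈ Ico (0:ℝ) 1) (ht : t ∈ Ioo θ' 1)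
    (h : ∫ r in (0:ℝ)..s, f r ≤ ∫ r in (0:ℝ)..t, f r) : s ≤ t := by
  by_contra! hts
  have ht₀ : t ∈ Ico (0:ℝ) 1 := ⟨(hf.θ_mem.1.le.trans hθθ').trans ht.1.le, ht.2⟩
  exact h.not_gt ((hf.integral_lt_integral_iff hθθ' hF ht₀ ⟨ht.1.trans hts, hs.2⟩).2 hts)

theorem eq_of_integral_eq (hf : Bistable f θ) {θ' s t : ℝ} (hθθ' : θ ≤ θ')
    (hF : ∫ r in (0:ℝ)..θ', f r = 0) (hs : s ∈ Ico (0:ℝ) 1) (ht : t ∈ Ioo θ' 1)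
    (h : ∫ r in (0:ℝ)..s, f r = ∫ r in (0:ℝ)..t, f r) : s = t :=
  (hf.le_of_integral_le hθθ' hF hs ht h.le).antisymm
    (not_lt.1 fun hst => ((hf.integral_lt_integral_iff hθθ' hF hs ht).2 hst).ne h)

end Bistable

theorem limit_problem_solution_monotone_general
    (du L : ℝ) (hdu : 0 < du)
    (f : ℝ → ℝ) (θ θ' : ℝ) (hf : Bistable f θ)
    (hθ'mem : θ' ∈ Set.Ioo θ 1) (hθ'F : (∫ r in (0:ℝ)..θ', f r) = 0)
    (u u' u'' : ℝ → ℝ)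
    (hd1 : ∀ x ∈ Set.Icc 0 L, HasDerivWithinAt u (u' x) (Set.Icc 0 L) x)
    (hd2 : ∀ x ∈ Set.Icc 0 L, HasDerivWithinAt u' (u'' x) (Set.Icc 0 L) x)
    (heq : ∀ x ∈ Set.Ioo (0:ℝ) L, -du * u'' x = f (u x))
    (huL' : u' L = 0)
    (hbd : ∀ x ∈ Set.Icc (0:ℝ) L, 0 < u x ∧ u x < 1)
    (huL : θ' < u L) :
    ∀ x ∈ Set.Ico (0:ℝ) L, 0 < u' x := by
  intro x hx
  have hL : L ∈ Icc 0 L := right_mem_Icc.2 (hx.1.trans hx.2.le)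
  have huL_mem : u L ∈ Ioo θ' 1 := ⟨huL, (hbd L hL).2⟩
  have hu_mem : ∀ y ∈ Icc 0 L, u y ∈ Ico 0 1 := fun y hy => ⟨(hbd y hy).1.le, (hbd y hy).2⟩
  have henergy : ∀ y ∈ Icc 0 L,
      du / 2 * u' y ^ 2 + ∫ r in (0:ℝ)..u y, f r = ∫ r in (0:ℝ)..u L, f r := fun y hy => by
    simpa [huL'] using
      energy_eq_energy_right hd1 hd2 (fun z hz => hf.hasDerivAt_integral (hbd z hz)) heq hy
  have hmax : IsMaxOn u (Icc 0 L) L := fun y hy =>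
    hf.le_of_integral_le hθ'mem.1.le hθ'F (hu_mem y hy) huL_mem
      (by nlinarith [henergy y hy, sq_nonneg (u' y)])
  refine pos_of_hasDerivWithinAt_of_isMaxOn_right hd1 hmax (fun y hy hy0 => ?_)
    (fun c hc => ?_) hx
  · have hy' : y ∈ Icc 0 L := Ico_subset_Icc_self hy
    exact hf.eq_of_integral_eq hθ'mem.1.le hθ'F (hu_mem y hy') huL_mem
      (by simpa [hy0] using henergy y hy')
  · by_contra! hconst
    have hnhds : ∀ y ∈ Ioo c L, Icc 0 L ∈ 𝓝 y := fun y hy =>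
      Icc_mem_nhds (hc.1.trans_lt hy.1) hy.2
    exact (hf.pos (u L) ⟨hθ'mem.1.trans huL, huL_mem.2⟩).ne' <|
      apply_eq_zero_of_const_on_Ioo hc.2
        (fun y hy => (hd1 y (mem_of_mem_nhds (hnhds y hy))).hasDerivAt (hnhds y hy))
        (fun y hy => (hd2 y (mem_of_mem_nhds (hnhds y hy))).hasDerivAt (hnhds y hy))
        (fun y hy => heq y ⟨hc.1.trans_lt hy.1, hy.2⟩) hconst

/-- **Monotonicity step of the appendix proof of Proposition 4.2.**
A C² solution of `−d_u u'' = f(u)` on `(0,L)` with `u(0) = p`, `u'(L) = 0`,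
`0 < u < 1` on `[0,L]` and `u(L) > θ'` (the unique zero of `F` in `(0,1)`)
is strictly increasing: `u' > 0` on `[0,L)`. -/
theorem limit_problem_solution_monotone
    (du L : ℝ) (hdu : 0 < du) (hL : 0 < L)
    (f : ℝ → ℝ) (θ θ' : ℝ) (hf : Bistable f θ)
    (hθ'mem : θ' ∈ Set.Ioo θ 1) (hθ'F : (∫ r in (0:ℝ)..θ', f r) = 0)
    (p : ℝ) (hp : 0 < p) (hp1 : p < 1)
    (u u' u'' : ℝ → ℝ)
    (hd1 : ∀ x ∈ Set.Icc 0 L, HasDerivWithinAt u (u' x) (Set.Icc 0 L) x)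
    (hd2 : ∀ x ∈ Set.Icc 0 L, HasDerivWithinAt u' (u'' x) (Set.Icc 0 L) x)
    (hd2c : ContinuousOn u'' (Set.Icc 0 L))
    (heq : ∀ x ∈ Set.Ioo (0:ℝ) L, -du * u'' x = f (u x))
    (hu0 : u 0 = p) (huL' : u' L = 0)
    (hbd : ∀ x ∈ Set.Icc (0:ℝ) L, 0 < u x ∧ u x < 1)
    (huL : θ' < u L) :
    ∀ x ∈ Set.Ico (0:ℝ) L, 0 < u' x :=
  limit_problem_solution_monotone_general du L hdu f θ θ' hf hθ'mem hθ'F u u' u'' hd1 hd2 heq huL'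
    hbd huL
end

section
/- Let d_u > 0, L > 0, and let f be C¹ on an interval containing the range of w₁. Suppose w₁ : [0,L] → ℝ is a C³ solution of −d_u w₁'' = f(w₁) on [0,L] with w₁'(L) = 0, and w₂ : [0,L] → ℝ is a C² solution of d_u w₂'' + f'(w₁) w₂ = (2/L) f(w₁) on [0,L] with w₂'(L) = 0 and w₂(0) = (1/3) w₁'(0). Define z(x) = w₂(x) + (x/L − 1/3) w₁'(x). Then z satisfies the homogeneous linearized equation d_u z'' + f'(w₁) z = 0 on [0,L], together with z(0) = 0 and z'(L) = −(2/3) f(w₁(L)) / d_u. -/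
/-!
Differentiating `−d w₁'' = f(w₁)` shows that `w₁'` solves the homogeneous linearized equation
`d (w₁')'' + f'(w₁) w₁' = 0`. Since `((x/L − 1/3) w₁')'' = (2/L) w₁'' + (x/L − 1/3) w₁'''`, and
`d (2/L) w₁'' = −(2/L) f(w₁)`, the correction term in `z` cancels exactly the source `(2/L) f(w₁)`
of the equation for `w₂`. The boundary values follow from `w₂(0) = w₁'(0)/3`, `w₁'(L) = w₂'(L) = 0`
and `w₁''(L) = −f(w₁(L))/d`.
-/

theorem linearized_eq_of_neg_mul_eq_comp {f f' u u' u'' u''' : ℝ → ℝ} {d : ℝ} {s : Set ℝ}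
    {x : ℝ} (hs : UniqueDiffWithinAt ℝ s x) (hx : x ∈ s)
    (hf : HasDerivAt f (f' (u x)) (u x)) (hu : HasDerivWithinAt u (u' x) s x)
    (hu'' : HasDerivWithinAt u'' (u''' x) s x) (hode : ∀ y ∈ s, -d * u'' y = f (u y)) :
    d * u''' x + f' (u x) * u' x = 0 := by
  have hlhs : HasDerivWithinAt (fun y => -d * u'' y) (-d * u''' x) s x := hu''.const_mul (-d)
  have hrhs : HasDerivWithinAt (fun y => -d * u'' y) (f' (u x) * u' x) s x :=
    (hf.comp_hasDerivWithinAt x hu).congr_of_mem hode hx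
  linear_combination -hs.eq_deriv _ hlhs hrhs

theorem HasDerivWithinAt.add_affine_mul {v u : ℝ → ℝ} {a b : ℝ} {s : Set ℝ} {x : ℝ}
    (hv : HasDerivWithinAt v a s x) (hu : HasDerivWithinAt u b s x) (L c : ℝ) :
    HasDerivWithinAt (fun y => v y + (y / L - c) * u y) (a + u x / L + (x / L - c) * b) s x := by
  have hc : HasDerivWithinAt (fun y : ℝ => y / L - c) (1 / L) s x :=
    ((hasDerivWithinAt_id x s).div_const L).sub_const c
  exact (hv.add (hc.mul hu)).congr_deriv (by ring)

theorem auxiliary_function_z_general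
    (du L : ℝ) (hdu : 0 < du) (hL : 0 < L)
    (f f' : ℝ → ℝ)
    (w₁ w₁' w₁'' w₁''' w₂ w₂' w₂'' : ℝ → ℝ)
    -- `f` is C¹ on an interval containing the range of `w₁`:
    (hf : ∀ x ∈ Set.Icc (0:ℝ) L, HasDerivAt f (f' (w₁ x)) (w₁ x))
    -- `w₁` is a C³ solution of `−d_u w₁'' = f(w₁)` on `[0,L]` with `w₁'(L) = 0`:
    (hw₁d1 : ∀ x ∈ Set.Icc 0 L, HasDerivWithinAt w₁ (w₁' x) (Set.Icc 0 L) x)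
    (hw₁d2 : ∀ x ∈ Set.Icc 0 L, HasDerivWithinAt w₁' (w₁'' x) (Set.Icc 0 L) x)
    (hw₁d3 : ∀ x ∈ Set.Icc 0 L, HasDerivWithinAt w₁'' (w₁''' x) (Set.Icc 0 L) x)
    (hw₁eq : ∀ x ∈ Set.Icc (0:ℝ) L, -du * w₁'' x = f (w₁ x))
    (hw₁L : w₁' L = 0)
    -- `w₂` is a C² solution of the inhomogeneous linearized equation:
    (hw₂d1 : ∀ x ∈ Set.Icc 0 L, HasDerivWithinAt w₂ (w₂' x) (Set.Icc 0 L) x)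
    (hw₂d2 : ∀ x ∈ Set.Icc 0 L, HasDerivWithinAt w₂' (w₂'' x) (Set.Icc 0 L) x)
    (hw₂eq : ∀ x ∈ Set.Icc (0:ℝ) L,
      du * w₂'' x + f' (w₁ x) * w₂ x = 2 / L * f (w₁ x))
    (hw₂L : w₂' L = 0) (hw₂0 : w₂ 0 = w₁' 0 / 3) :
    ∃ z' z'' : ℝ → ℝ,
      (∀ x ∈ Set.Icc (0:ℝ) L,
        HasDerivWithinAt (fun y => w₂ y + (y / L - 1/3) * w₁' y) (z' x)
          (Set.Icc 0 L) x) ∧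
      (∀ x ∈ Set.Icc (0:ℝ) L, HasDerivWithinAt z' (z'' x) (Set.Icc 0 L) x) ∧
      (∀ x ∈ Set.Icc (0:ℝ) L,
        du * z'' x + f' (w₁ x) * (w₂ x + (x / L - 1/3) * w₁' x) = 0) ∧
      (w₂ 0 + (0 / L - 1/3) * w₁' 0 = 0) ∧
      z' L = -(2/3) * f (w₁ L) / du := by
  refine ⟨fun x => w₂' x + w₁' x / L + (x / L - 1/3) * w₁'' x,
    fun x => w₂'' x + w₁'' x / L + w₁'' x / L + (x / L - 1/3) * w₁''' x,
    fun x hx => (hw₂d1 x hx).add_affine_mul (hw₁d2 x hx) L (1/3),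
    fun x hx => ((hw₂d2 x hx).add ((hw₁d2 x hx).div_const L)).add_affine_mul (hw₁d3 x hx) L (1/3),
    fun x hx => ?_, by rw [hw₂0]; ring, ?_⟩
  · have hw₁'lin := linearized_eq_of_neg_mul_eq_comp ((uniqueDiffOn_Icc hL) x hx) hx (hf x hx)
      (hw₁d1 x hx) (hw₁d3 x hx) hw₁eq
    linear_combination hw₂eq x hx - 2 / L * hw₁eq x hx + (x / L - 1/3) * hw₁'lin
  · show w₂' L + w₁' L / L + (L / L - 1/3) * w₁'' L = _
    rw [hw₂L, hw₁L, div_self hL.ne', ← hw₁eq L (Set.right_mem_Icc.mpr hL.le)]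
    field_simp
    ring

/-- **Auxiliary-function computation in the proof of Theorem 4.4.**
With `w₁` a C³ solution of `−d_u w₁'' = f(w₁)`, `w₁'(L) = 0`, and `w₂` a C²
solution of `d_u w₂'' + f'(w₁) w₂ = (2/L) f(w₁)` with `w₂'(L) = 0`,
`w₂(0) = (1/3) w₁'(0)`, the function `z(x) = w₂(x) + (x/L − 1/3) w₁'(x)`
satisfies the homogeneous linearized equation `d_u z'' + f'(w₁) z = 0` on
`[0,L]`, with `z(0) = 0` and `z'(L) = −(2/3) f(w₁(L)) / d_u`. -/
theorem auxiliary_function_z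
    (du L : ℝ) (hdu : 0 < du) (hL : 0 < L)
    (f f' : ℝ → ℝ)
    (w₁ w₁' w₁'' w₁''' w₂ w₂' w₂'' : ℝ → ℝ)
    -- `f` is C¹ on an interval containing the range of `w₁`:
    (hf : ∀ x ∈ Set.Icc (0:ℝ) L, HasDerivAt f (f' (w₁ x)) (w₁ x))
    (hf'c : ContinuousOn (fun x => f' (w₁ x)) (Set.Icc 0 L))
    -- `w₁` is a C³ solution of `−d_u w₁'' = f(w₁)` on `[0,L]` with `w₁'(L) = 0`:
    (hw₁d1 : ∀ x ∈ Set.Icc 0 L, HasDerivWithinAt w₁ (w₁' x) (Set.Icc 0 L) x)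
    (hw₁d2 : ∀ x ∈ Set.Icc 0 L, HasDerivWithinAt w₁' (w₁'' x) (Set.Icc 0 L) x)
    (hw₁d3 : ∀ x ∈ Set.Icc 0 L, HasDerivWithinAt w₁'' (w₁''' x) (Set.Icc 0 L) x)
    (hw₁d3c : ContinuousOn w₁''' (Set.Icc 0 L))
    (hw₁eq : ∀ x ∈ Set.Icc (0:ℝ) L, -du * w₁'' x = f (w₁ x))
    (hw₁L : w₁' L = 0)
    -- `w₂` is a C² solution of the inhomogeneous linearized equation:
    (hw₂d1 : ∀ x ∈ Set.Icc 0 L, HasDerivWithinAt w₂ (w₂' x) (Set.Icc 0 L) x)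
    (hw₂d2 : ∀ x ∈ Set.Icc 0 L, HasDerivWithinAt w₂' (w₂'' x) (Set.Icc 0 L) x)
    (hw₂d2c : ContinuousOn w₂'' (Set.Icc 0 L))
    (hw₂eq : ∀ x ∈ Set.Icc (0:ℝ) L,
      du * w₂'' x + f' (w₁ x) * w₂ x = 2 / L * f (w₁ x))
    (hw₂L : w₂' L = 0) (hw₂0 : w₂ 0 = w₁' 0 / 3) :
    ∃ z' z'' : ℝ → ℝ,
      (∀ x ∈ Set.Icc (0:ℝ) L,
        HasDerivWithinAt (fun y => w₂ y + (y / L - 1/3) * w₁' y) (z' x)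
          (Set.Icc 0 L) x) ∧
      (∀ x ∈ Set.Icc (0:ℝ) L, HasDerivWithinAt z' (z'' x) (Set.Icc 0 L) x) ∧
      (∀ x ∈ Set.Icc (0:ℝ) L,
        du * z'' x + f' (w₁ x) * (w₂ x + (x / L - 1/3) * w₁' x) = 0) ∧
      (w₂ 0 + (0 / L - 1/3) * w₁' 0 = 0) ∧
      z' L = -(2/3) * f (w₁ L) / du :=
  auxiliary_function_z_general du L hdu hL f f' w₁ w₁' w₁'' w₁''' w₂ w₂' w₂'' hf hw₁d1 hw₁d2 hw₁d3
    hw₁eq hw₁L hw₂d1 hw₂d2 hw₂eq hw₂L hw₂0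
end
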